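/- arXiv:2108.00643 — 2 statements merged into one kernel-verified Lean document; each statement's English description precedes it below -/
import Mathlib

section
/- If A, B are positive definite matrices with A ♮_t B ≤ I in the Löwner order, then A ♯_t B ≤ I, for all t ∈ [0,1]. -/
open Matrix
open scoped ComplexOrder

noncomputable def mpow {m : Type*} [Fintype m] [DecidableEq m]
    (A : Matrix m m ℂ) (t : ℝ) : Matrix m m ℂ :=
  if h : A.IsHermitian then
    (h.eigenvectorUnitary : Matrix m m ℂ) *
      Matrix.diagonal (fun i => ((h.eigenvalues i ^ t : ℝ) : ℂ)) *
      star (h.eigenvectorUnitary : Matrix m m ℂ)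
  else A

/-- t-metric geometric mean `A ♯ₜ B`. -/
noncomputable def msharp {m : Type*} [Fintype m] [DecidableEq m]
    (A B : Matrix m m ℂ) (t : ℝ) : Matrix m m ℂ :=
  mpow A (1/2) * mpow (mpow A (-(1/2)) * B * mpow A (-(1/2))) t * mpow A (1/2)

/-- t-spectral geometric mean `A ♮ₜ B`. -/
noncomputable def mnat {m : Type*} [Fintype m] [DecidableEq m]
    (A B : Matrix m m ℂ) (t : ℝ) : Matrix m m ℂ :=
  mpow (msharp A⁻¹ B (1/2)) t * A * mpow (msharp A⁻¹ B (1/2)) t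

/-- Eigenvalues in non-increasing order (junk value `0` if not Hermitian). -/
noncomputable def eigsDesc {n : ℕ} (A : Matrix (Fin n) (Fin n) ℂ) : Fin n → ℝ :=
  if h : A.IsHermitian then (fun i => h.eigenvalues (Tuple.sort h.eigenvalues i.rev)) else 0

/-- `x` is log-majorized by `y` (both listed in non-increasing order). -/
def LogMaj {n : ℕ} (x y : Fin n → ℝ) : Prop :=
  (∀ k : ℕ, ∏ i ∈ Finset.univ.filter (fun i : Fin n => (i : ℕ) < k), x i ≤
      ∏ i ∈ Finset.univ.filter (fun i : Fin n => (i : ℕ) < k), y i) ∧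
    ∏ i, x i = ∏ i, y i

/-- k-th compound matrix. -/
noncomputable def compound {n : ℕ} (k : ℕ) (A : Matrix (Fin n) (Fin n) ℂ) :
    Matrix {s : Finset (Fin n) // s.card = k} {s : Finset (Fin n) // s.card = k} ℂ :=
  fun s t => (A.submatrix (fun i => (s.1.orderIsoOfFin s.2 i : Fin n))
    (fun i => (t.1.orderIsoOfFin t.2 i : Fin n))).det

/-!
Let `C = A⁻¹ ♯ B`, the positive solution of the Riccati equation `C A C = B`. Then
`A ♮ₜ B = Cᵗ A Cᵗ`, so the hypothesis says `A ≤ C^(-2t)`, and conjugating by `C` gives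
`B ≤ C^(2-2t)`. The weighted geometric mean is monotone in its second argument by the Löwner–Heinz
inequality, and in its first one by the symmetry `A ♯ₜ B = B ♯₁₋ₜ A`. Hence
`A ♯ₜ B ≤ C^(-2t) ♯ₜ C^(2-2t) = C⁰ = I`.
-/

-- The operator norm makes `Matrix m m ℂ` a C⋆-algebra, as the order lemmas of the CFC require.
open scoped MatrixOrder Matrix.Norms.L2Operator

lemma Polynomial.aeval_mul_of_semiconjBy {R 𝒜 : Type*} [CommSemiring R] [Semiring 𝒜] [Algebra R 𝒜]
    {x a b : 𝒜} (h : SemiconjBy x a b) (p : Polynomial R) :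
    Polynomial.aeval b p * x = x * Polynomial.aeval a p := by
  induction p using Polynomial.induction_on' with
  | add p q hp hq => rw [map_add, map_add, add_mul, mul_add, hp, hq]
  | monomial n r =>
    rw [Polynomial.aeval_monomial, Polynomial.aeval_monomial, mul_assoc, ← (h.pow_right n).eq,
      ← mul_assoc, Algebra.commutes, mul_assoc]

section CStarAlgebra

variable {𝒜 : Type*} [CStarAlgebra 𝒜] [PartialOrder 𝒜] [StarOrderedRing 𝒜] {a b c : 𝒜}

lemma CFC.star_rpow (a : 𝒜) (x : ℝ) : star (a ^ x) = a ^ x :=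
  (IsSelfAdjoint.of_nonneg CFC.rpow_nonneg).star_eq

lemma CFC.rpow_rpow_of_isStrictlyPositive (ha : IsStrictlyPositive a) (x y : ℝ) :
    (a ^ x) ^ y = a ^ (x * y) := by
  rcases eq_or_ne x 0 with rfl | hx
  · simp [CFC.rpow_zero a, CFC.one_rpow]
  · exact CFC.rpow_rpow a x y hx

lemma CFC.mul_rpow_mul_self (hc : IsStrictlyPositive c) (x : ℝ) :
    c * c ^ x * c = c ^ (1 + x + 1) := by
  rw [CFC.rpow_add hc.isUnit, CFC.rpow_add hc.isUnit, CFC.rpow_one c]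

lemma CFC.conjugate_rpow_neg_conjugate_rpow (hc : IsStrictlyPositive c) (x : ℝ) (a : 𝒜) :
    c ^ (-x) * (c ^ x * a * c ^ x) * c ^ (-x) = a := by
  simp only [← mul_assoc, CFC.rpow_neg_mul_rpow x hc, one_mul]
  rw [mul_assoc, CFC.rpow_mul_rpow_neg x hc, mul_one]

lemma CFC.le_conjugate_rpow_neg_of_conjugate_rpow_le (hc : IsStrictlyPositive c) {x : ℝ}
    (h : c ^ x * a * c ^ x ≤ b) : a ≤ c ^ (-x) * b * c ^ (-x) := by
  simpa only [CFC.conjugate_rpow_neg_conjugate_rpow hc] using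
    conjugate_le_conjugate_of_nonneg h (CFC.rpow_nonneg (a := c) (y := -x))

end CStarAlgebra

section Matrix

variable {m : Type*} [Fintype m] [DecidableEq m] {A A' B B' C : Matrix m m ℂ}

lemma Matrix.inv_eq_rpow_neg_one (hA : IsStrictlyPositive A) : A⁻¹ = A ^ (-1 : ℝ) := by
  rw [nonsing_inv_eq_ringInverse, CFC.inverse_eq_rpow_neg_one]

-- On the finite set `spectrum (X Xᴴ) ∪ spectrum (Xᴴ X)`, `f` is a polynomial.
lemma Matrix.cfc_mul_star_self_mul (X : Matrix m m ℂ) (f : ℝ → ℝ) :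
    cfc f (X * star X) * X = X * cfc f (star X * X) := by
  have hfin := (X * star X).finite_real_spectrum.union (star X * X).finite_real_spectrum
  let p := Lagrange.interpolate hfin.toFinset id f
  have hp : ∀ x ∈ spectrum ℝ (X * star X) ∪ spectrum ℝ (star X * X), f x = p.eval x :=
    fun x hx => (Lagrange.eval_interpolate_at_node f Function.injective_id.injOn
      (hfin.mem_toFinset.mpr hx)).symm
  rw [cfc_congr fun x hx => hp x (Or.inl hx), cfc_congr fun x hx => hp x (Or.inr hx),
    cfc_polynomial p (X * star X), cfc_polynomial p (star X * X)]
  exact Polynomial.aeval_mul_of_semiconjBy (mul_assoc X (star X) X).symm p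

lemma Matrix.rpow_mul_star_self_mul (X : Matrix m m ℂ) (t : ℝ) :
    (X * star X) ^ t * X = X * (star X * X) ^ t := by
  rw [CFC.rpow_eq_cfc_real (mul_star_self_nonneg X), CFC.rpow_eq_cfc_real (star_mul_self_nonneg X),
    cfc_mul_star_self_mul]

lemma mpow_eq_rpow (hA : 0 ≤ A) (t : ℝ) : mpow A t = A ^ t := by
  have hA := Matrix.nonneg_iff_posSemidef.mp hA
  rw [CFC.rpow_eq_cfc_real hA.nonneg, hA.isHermitian.cfc_eq, mpow, dif_pos hA.isHermitian]
  rfl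

lemma msharp_eq_rpow (hA : 0 ≤ A) (hB : 0 ≤ B) (t : ℝ) :
    msharp A B t =
      A ^ (1 / 2 : ℝ) * (A ^ (-(1 / 2) : ℝ) * B * A ^ (-(1 / 2) : ℝ)) ^ t * A ^ (1 / 2 : ℝ) := by
  rw [msharp, mpow_eq_rpow hA, mpow_eq_rpow hA,
    mpow_eq_rpow (conjugate_nonneg_of_nonneg hB CFC.rpow_nonneg)]

lemma isStrictlyPositive_msharp (hA : IsStrictlyPositive A) (hB : IsStrictlyPositive B) (t : ℝ) :
    IsStrictlyPositive (msharp A B t) := by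
  rw [msharp_eq_rpow hA.nonneg hB.nonneg]
  cfc_tac

lemma msharp_mul_inv_mul_msharp (hA : IsStrictlyPositive A) (hB : 0 ≤ B) :
    msharp A B (1 / 2) * A⁻¹ * msharp A B (1 / 2) = B := by
  set D := A ^ (-(1 / 2) : ℝ) * B * A ^ (-(1 / 2) : ℝ) with hD
  have hD0 : 0 ≤ D := conjugate_nonneg_of_nonneg hB CFC.rpow_nonneg
  rw [msharp_eq_rpow hA.nonneg hB, Matrix.inv_eq_rpow_neg_one hA, ← hD]
  calc A ^ (1 / 2 : ℝ) * D ^ (1 / 2 : ℝ) * A ^ (1 / 2 : ℝ) * A ^ (-1 : ℝ) *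
        (A ^ (1 / 2 : ℝ) * D ^ (1 / 2 : ℝ) * A ^ (1 / 2 : ℝ))
      = A ^ (1 / 2 : ℝ) * (D ^ (1 / 2 : ℝ) * (A ^ (1 / 2 : ℝ) * A ^ (-1 : ℝ) * A ^ (1 / 2 : ℝ)) *
          D ^ (1 / 2 : ℝ)) * A ^ (1 / 2 : ℝ) := by simp only [mul_assoc]
    _ = A ^ (1 / 2 : ℝ) * D * A ^ (1 / 2 : ℝ) := by
      rw [← CFC.rpow_add hA.isUnit, ← CFC.rpow_add hA.isUnit,
        show (1 / 2 + -1 + 1 / 2 : ℝ) = 0 by norm_num, CFC.rpow_zero A, mul_one,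
        ← CFC.sqrt_eq_rpow (a := D), CFC.sqrt_mul_sqrt_self D]
    _ = B := by
      simpa only [neg_neg] using CFC.conjugate_rpow_neg_conjugate_rpow hA (-(1 / 2)) B

lemma msharp_rpow_rpow (hC : IsStrictlyPositive C) (x y t : ℝ) :
    msharp (C ^ x) (C ^ y) t = C ^ ((1 - t) * x + t * y) := by
  have hx : 0 ≤ C ^ x := CFC.rpow_nonneg
  have hy : 0 ≤ C ^ y := CFC.rpow_nonneg
  rw [msharp_eq_rpow hx hy, CFC.rpow_rpow_of_isStrictlyPositive hC,
    CFC.rpow_rpow_of_isStrictlyPositive hC, ← CFC.rpow_add hC.isUnit, ← CFC.rpow_add hC.isUnit,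
    CFC.rpow_rpow_of_isStrictlyPositive hC, ← CFC.rpow_add hC.isUnit, ← CFC.rpow_add hC.isUnit]
  congr 1
  ring

lemma Matrix.inv_rpow_mul_inv_mul_rpow (hA : IsUnit A) (hB : IsStrictlyPositive B) (x : ℝ) :
    (B ^ x * A⁻¹ * B ^ x)⁻¹ = B ^ (-x) * A * B ^ (-x) := by
  apply Matrix.inv_eq_left_inv
  calc B ^ (-x) * A * B ^ (-x) * (B ^ x * A⁻¹ * B ^ x)
      = B ^ (-x) * (A * (B ^ (-x) * B ^ x) * A⁻¹) * B ^ x := by simp only [mul_assoc]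
    _ = 1 := by
      rw [CFC.rpow_neg_mul_rpow x hB, mul_one, Matrix.mul_nonsing_inv A
        ((Matrix.isUnit_iff_isUnit_det A).mp hA), mul_one, CFC.rpow_neg_mul_rpow x hB]

-- With `X = B^(1/2) A^(-1/2)`: `A^(-1/2) B A^(-1/2) = Xᴴ X` and `B^(-1/2) A B^(-1/2) = (X Xᴴ)⁻¹`.
lemma msharp_comm (hA : IsStrictlyPositive A) (hB : IsStrictlyPositive B) (t : ℝ) :
    msharp A B t = msharp B A (1 - t) := by
  set X := B ^ (1 / 2 : ℝ) * A ^ (-(1 / 2) : ℝ) with hX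
  have hXu : IsUnit X := (hB.isUnit.cfcRpow _).mul (hA.isUnit.cfcRpow _)
  have hsXX_pos : IsStrictlyPositive (star X * X) :=
    (hXu.star.mul hXu).isStrictlyPositive (star_mul_self_nonneg X)
  have hXsX_pos : IsStrictlyPositive (X * star X) :=
    (hXu.mul hXu.star).isStrictlyPositive (mul_star_self_nonneg X)
  have hstarX : star X = A ^ (-(1 / 2) : ℝ) * B ^ (1 / 2 : ℝ) := by
    rw [hX, star_mul, CFC.star_rpow, CFC.star_rpow]
  have hsXX : star X * X = A ^ (-(1 / 2) : ℝ) * B * A ^ (-(1 / 2) : ℝ) := by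
    rw [hstarX, hX, mul_assoc, ← mul_assoc (B ^ _), ← CFC.rpow_add hB.isUnit, add_halves,
      CFC.rpow_one B, ← mul_assoc]
  have hXsX : X * star X = B ^ (1 / 2 : ℝ) * A⁻¹ * B ^ (1 / 2 : ℝ) := by
    rw [hX, hstarX, mul_assoc, ← mul_assoc (A ^ _), ← CFC.rpow_add hA.isUnit,
      show (-(1 / 2) + -(1 / 2) : ℝ) = -1 by norm_num, ← Matrix.inv_eq_rpow_neg_one hA, ← mul_assoc]
  have hXsX_inv : (X * star X) ^ (-1 : ℝ) = B ^ (-(1 / 2) : ℝ) * A * B ^ (-(1 / 2) : ℝ) := by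
    rw [← Matrix.inv_eq_rpow_neg_one hXsX_pos, hXsX, Matrix.inv_rpow_mul_inv_mul_rpow hA.isUnit hB]
  have hpow : (star X * X) ^ t = (star X * X) ^ (t - 1) * (star X * X) := by
    calc (star X * X) ^ t = (star X * X) ^ (t - 1 + 1) := by rw [sub_add_cancel]
      _ = (star X * X) ^ (t - 1) * (star X * X) := by
        rw [CFC.rpow_add hsXX_pos.isUnit, CFC.rpow_one _ hsXX_pos.nonneg]
  have haX : A ^ (1 / 2 : ℝ) * star X = B ^ (1 / 2 : ℝ) := by
    rw [hstarX, ← mul_assoc, CFC.rpow_mul_rpow_neg _ hA, one_mul]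
  have hXa : X * A ^ (1 / 2 : ℝ) = B ^ (1 / 2 : ℝ) := by
    rw [hX, mul_assoc, CFC.rpow_neg_mul_rpow _ hA, mul_one]
  have hintertwine : (star X * X) ^ (t - 1) * star X = star X * (X * star X) ^ (t - 1) := by
    simpa only [star_star] using Matrix.rpow_mul_star_self_mul (star X) (t - 1)
  rw [msharp_eq_rpow hA.nonneg hB.nonneg, msharp_eq_rpow hB.nonneg hA.nonneg, ← hsXX, ← hXsX_inv,
    CFC.rpow_rpow_of_isStrictlyPositive hXsX_pos, show -1 * (1 - t) = t - 1 by ring]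
  calc A ^ (1 / 2 : ℝ) * (star X * X) ^ t * A ^ (1 / 2 : ℝ)
      = A ^ (1 / 2 : ℝ) * ((star X * X) ^ (t - 1) * star X) * (X * A ^ (1 / 2 : ℝ)) := by
        rw [hpow]; simp only [mul_assoc]
    _ = A ^ (1 / 2 : ℝ) * star X * (X * star X) ^ (t - 1) * (X * A ^ (1 / 2 : ℝ)) := by
        rw [hintertwine]; simp only [mul_assoc]
    _ = B ^ (1 / 2 : ℝ) * (X * star X) ^ (t - 1) * B ^ (1 / 2 : ℝ) := by rw [haX, hXa]

lemma msharp_le_msharp_right {t : ℝ} (hA : 0 ≤ A) (hB : 0 ≤ B) (hBB' : B ≤ B')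
    (ht : t ∈ Set.Icc 0 1) : msharp A B t ≤ msharp A B' t := by
  rw [msharp_eq_rpow hA hB, msharp_eq_rpow hA (hB.trans hBB')]
  exact conjugate_le_conjugate_of_nonneg
    (CFC.rpow_le_rpow ht (conjugate_le_conjugate_of_nonneg hBB' CFC.rpow_nonneg)) CFC.rpow_nonneg

lemma msharp_le_msharp_left {t : ℝ} (hA : IsStrictlyPositive A) (hAA' : A ≤ A')
    (hB : IsStrictlyPositive B) (ht : t ∈ Set.Icc 0 1) : msharp A B t ≤ msharp A' B t := by
  have hA' : IsStrictlyPositive A' := hA.of_le hAA'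
  rw [msharp_comm hA hB, msharp_comm hA' hB]
  exact msharp_le_msharp_right hB.nonneg hA.nonneg hAA' ⟨by linarith [ht.2], by linarith [ht.1]⟩

end Matrix

theorem msharp_le_one_of_mnat_le_one {n : ℕ} (A B : Matrix (Fin n) (Fin n) ℂ)
    (hA : A.PosDef) (hB : B.PosDef) (t : ℝ) (ht : t ∈ Set.Icc (0:ℝ) 1)
    (h : ((1 : Matrix (Fin n) (Fin n) ℂ) - mnat A B t).PosSemidef) :
    ((1 : Matrix (Fin n) (Fin n) ℂ) - msharp A B t).PosSemidef := by
  have hA' := hA.isStrictlyPositive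
  have hB' := hB.isStrictlyPositive
  set C := msharp A⁻¹ B (1 / 2)
  have hC : IsStrictlyPositive C := isStrictlyPositive_msharp hA.inv.isStrictlyPositive hB' _
  have hCAC : C * A * C = B := by
    simpa only [Matrix.nonsing_inv_nonsing_inv A ((Matrix.isUnit_iff_isUnit_det A).mp hA.isUnit)]
      using msharp_mul_inv_mul_msharp hA.inv.isStrictlyPositive hB'.nonneg
  rw [← Matrix.le_iff] at h ⊢
  rw [mnat, mpow_eq_rpow hC.nonneg] at h
  have hA_le : A ≤ C ^ (-(2 * t)) := by
    have := CFC.le_conjugate_rpow_neg_of_conjugate_rpow_le hC h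
    rwa [mul_one, ← CFC.rpow_add hC.isUnit, ← neg_add, ← two_mul] at this
  have hB_le : B ≤ C ^ (2 - 2 * t) := by
    have := conjugate_le_conjugate_of_nonneg hA_le hC.nonneg
    rwa [hCAC, CFC.mul_rpow_mul_self hC, show 1 + -(2 * t) + 1 = 2 - 2 * t by ring] at this
  calc msharp A B t ≤ msharp A (C ^ (2 - 2 * t)) t :=
        msharp_le_msharp_right hA'.nonneg hB'.nonneg hB_le ht
    _ ≤ msharp (C ^ (-(2 * t))) (C ^ (2 - 2 * t)) t :=
        msharp_le_msharp_left hA' hA_le (hC.rpow _ (2 - 2 * t)) ht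
    _ = C ^ ((1 - t) * -(2 * t) + t * (2 - 2 * t)) := msharp_rpow_rpow hC _ _ _
    _ = 1 := by rw [show (1 - t) * -(2 * t) + t * (2 - 2 * t) = 0 by ring, CFC.rpow_zero C]
end

section
/- It is not true in general that A ♯ B ≤ A ♮ B in the Löwner order for positive definite matrices: there exist 2×2 positive definite A, B such that A ♮ B − A ♯ B has a negative eigenvalue. For example A = [[6,-3],[-3,4]], B = [[4,-2],[-2,5]]. -/
open Matrix
open scoped ComplexOrder

/-! The geometric mean `A ♯ B` is the positive semidefinite solution `G` of the Riccati equation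
`G A⁻¹ G = B`. This lets us choose `A` and `B` so that every mean involved is rational:
`A ♯ B = G` and `A⁻¹ ♯ B = F²` for explicit `F, G ≥ 0`, hence `A ♮ B = F A F`.
The top-left entry of `A ♮ B - A ♯ B` is then `4 - 79/14 < 0`. -/

section

variable {m : Type*} [Fintype m] [DecidableEq m] {A B F G X : Matrix m m ℂ}

lemma mpow_eq_cfc (hA : A.IsHermitian) (t : ℝ) : mpow A t = cfc (· ^ t : ℝ → ℝ) A := by
  rw [mpow, dif_pos hA, hA.cfc_eq, IsHermitian.cfc, Unitary.conjStarAlgAut_apply]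
  rfl

lemma posSemidef_mpow (hA : A.PosSemidef) (t : ℝ) : (mpow A t).PosSemidef := by
  rw [mpow, dif_pos hA.1]
  refine (posSemidef_diagonal_iff.mpr fun i ↦ ?_).mul_mul_conjTranspose_same _
  exact_mod_cast Real.rpow_nonneg (hA.eigenvalues_nonneg i) t

lemma mpow_zero (hA : A.IsHermitian) : mpow A 0 = 1 := by
  simpa [mpow_eq_cfc hA] using cfc_const_one ℝ A hA.isSelfAdjoint

lemma mpow_one (hA : A.IsHermitian) : mpow A 1 = A := by
  simpa [mpow_eq_cfc hA] using cfc_id' ℝ A hA.isSelfAdjoint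

lemma mpow_add (hA : A.PosDef) (s t : ℝ) : mpow A (s + t) = mpow A s * mpow A t := by
  simp only [mpow_eq_cfc hA.1]
  rw [← cfc_mul _ _ A (A.finite_real_spectrum.continuousOn _)
    (A.finite_real_spectrum.continuousOn _)]
  refine cfc_congr fun x hx ↦ Real.rpow_add ?_ s t
  rw [hA.1.spectrum_real_eq_range_eigenvalues] at hx
  obtain ⟨i, rfl⟩ := hx
  exact hA.eigenvalues_pos i

lemma mpow_neg_one (hA : A.PosDef) : mpow A (-1) = A⁻¹ := by
  refine (inv_eq_left_inv ?_).symm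
  nth_rw 2 [← mpow_one hA.1]
  rw [← mpow_add hA]
  norm_num [mpow_zero hA.1]

lemma mpow_mul_self_half (hX : X.PosSemidef) :
    mpow (X * X) (1 / 2) = X := by
  have hXX : X * X = cfc (· ^ 2 : ℝ → ℝ) X := by rw [cfc_pow_id X 2 hX.1.isSelfAdjoint, sq]
  rw [hXX, mpow_eq_cfc (cfc_predicate (· ^ 2 : ℝ → ℝ) X),
    ← cfc_comp' (· ^ (1 / 2 : ℝ)) (· ^ 2) X
    ((X.finite_real_spectrum.image _).continuousOn _) (ha := hX.1.isSelfAdjoint)]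
  conv_rhs => rw [← cfc_id' ℝ X hX.1.isSelfAdjoint]
  refine cfc_congr fun x hx ↦ ?_
  rw [hX.1.spectrum_real_eq_range_eigenvalues] at hx
  obtain ⟨i, rfl⟩ := hx
  rw [← Real.sqrt_eq_rpow, Real.sqrt_sq (hX.eigenvalues_nonneg i)]

lemma msharp_half_eq_of_eq_mul_inv_mul (hA : A.PosDef) (hG : G.PosSemidef)
    (hB : B = G * A⁻¹ * G) :
    msharp A B (1 / 2) = G := by
  set S := mpow A (1 / 2)
  set N := mpow A (-(1 / 2))
  have hSN : S * N = 1 := by rw [← mpow_add hA]; norm_num [mpow_zero hA.1]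
  have hNS : N * S = 1 := by rw [← mpow_add hA]; norm_num [mpow_zero hA.1]
  have hNN : N * N = A⁻¹ := by rw [← mpow_add hA, ← mpow_neg_one hA]; norm_num
  have hNGN : (N * G * N).PosSemidef := by
    have hN : Nᴴ = N := (posSemidef_mpow hA.posSemidef _).1.eq
    simpa only [hN] using hG.mul_mul_conjTranspose_same N
  have hNBN : N * B * N = (N * G * N) * (N * G * N) := by
    rw [hB, ← hNN]; simp only [Matrix.mul_assoc]
  rw [msharp, hNBN, mpow_mul_self_half hNGN]
  calc S * (N * G * N) * S = (S * N) * G * (N * S) := by simp only [Matrix.mul_assoc]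
    _ = G := by rw [hSN, hNS, Matrix.one_mul, Matrix.mul_one]

lemma mnat_half_eq_of_eq_mul_mul (hA : A.PosDef) (hF : F.PosSemidef)
    (hB : B = F * F * A * (F * F)) :
    mnat A B (1 / 2) = F * A * F := by
  have hFF : (F * F).PosSemidef := by
    simpa only [hF.1.eq] using posSemidef_conjTranspose_mul_self F
  have hsharp_inv : msharp A⁻¹ B (1 / 2) = F * F := by
    refine msharp_half_eq_of_eq_mul_inv_mul hA.inv hFF ?_
    rw [nonsing_inv_nonsing_inv _ ((isUnit_iff_isUnit_det A).mp hA.isUnit), hB]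
  rw [mnat, hsharp_inv, mpow_mul_self_half hF]

end

lemma posDef_fin_two {a b c : ℝ} (ha : 0 < a) (hdet : b * b < a * c) :
    (!![(a : ℂ), b; b, c]).PosDef := by
  set L : Matrix (Fin 2) (Fin 2) ℂ := !![1, b / a; 0, 1]
  have hLDL : !![(a : ℂ), b; b, c] = Lᴴ * diagonal ![(a : ℂ), c - b * b / a] * L := by
    have ha' : (a : ℂ) ≠ 0 := by exact_mod_cast ha.ne'
    ext i j
    fin_cases i <;> fin_cases j <;> simp [L, Matrix.mul_apply, Fin.sum_univ_two]
    all_goals field_simp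
    ring
  have hD : (diagonal ![(a : ℂ), c - b * b / a]).PosDef := by
    refine posDef_diagonal_iff.mpr fun i ↦ ?_
    fin_cases i
    · simpa using ha
    · have : b * b / a < c := by rw [div_lt_iff₀ ha]; linarith
      simpa using (by exact_mod_cast this : (b : ℂ) * b / a < c)
  have hL : Function.Injective L.mulVec := by
    refine mulVec_injective_iff_isUnit.mpr ((isUnit_iff_isUnit_det L).mpr ?_)
    simp [L, det_fin_two_of]
  rw [hLDL]
  exact hD.conjTranspose_mul_mul_same hL

theorem not_msharp_le_mnat :
    ∃ A B : Matrix (Fin 2) (Fin 2) ℂ, A.PosDef ∧ B.PosDef ∧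
      ¬ (mnat A B (1/2) - msharp A B (1/2)).PosSemidef := by
  set A : Matrix (Fin 2) (Fin 2) ℂ := !![1, -1; -1, 4]
  set B : Matrix (Fin 2) (Fin 2) ℂ := !![109, 317; 317, 988]
  set F : Matrix (Fin 2) (Fin 2) ℂ := !![2, 1; 1, 4]
  set G : Matrix (Fin 2) (Fin 2) ℂ := !![79 / 14, 67 / 7; 67 / 7, 296 / 7]
  have hA : A.PosDef := by
    simpa using posDef_fin_two (a := 1) (b := -1) (c := 4) (by norm_num) (by norm_num)
  have hB : B.PosDef := by
    simpa using posDef_fin_two (a := 109) (b := 317) (c := 988) (by norm_num) (by norm_num)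
  have hF : F.PosDef := by
    simpa using posDef_fin_two (a := 2) (b := 1) (c := 4) (by norm_num) (by norm_num)
  have hG : G.PosDef := by
    simpa using
      posDef_fin_two (a := 79 / 14) (b := 67 / 7) (c := 296 / 7) (by norm_num) (by norm_num)
  have hA_inv : A⁻¹ = !![4 / 3, 1 / 3; 1 / 3, 1 / 3] :=
    inv_eq_right_inv (by rw [one_fin_two]; norm_num [A])
  have hsharp : msharp A B (1 / 2) = G := by
    refine msharp_half_eq_of_eq_mul_inv_mul hA hG.posSemidef ?_
    rw [hA_inv]
    norm_num [B, G]
  have hnat : mnat A B (1 / 2) = F * A * F :=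
    mnat_half_eq_of_eq_mul_mul hA hF.posSemidef (by norm_num [A, B, F])
  refine ⟨A, B, hA, hB, fun h ↦ ?_⟩
  have h00 := h.diag_nonneg (i := 0)
  rw [hnat, hsharp] at h00
  norm_num [A, F, G, Complex.le_def] at h00
end
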